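/- arXiv:quant-ph/0410233 — 4 statements merged into one kernel-verified Lean document; each statement's English description precedes it below -/
import Mathlib

section
/- (Classical Blackwell theorem.) Let (N, S, p) and (N, T, q) be two classical information structures. Then (N, S, p) is better than (N, T, q) if and only if there exists a stochastic matrix F = (f_{s,t})_{s∈S,t∈T} (i.e. f_{s,t} ≥ 0 and Σ_t f_{s,t} = 1 for every s ∈ S) such that q_{n,t} = Σ_s p_{n,s} f_{s,t} for every n ∈ N and t ∈ T. -/
/-!
A garbling `q = p f` by a stochastic matrix `f` can only lose information: a strategy `h` on `T`
is matched on `S` by playing, at each signal `s`, the best of the actions `h t` that `f s`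
mixes, because an average never exceeds its maximum.

Conversely, the garblings of `p` form a compact convex set, the linear image of a product of
simplices. If `q` lay outside it, a separating functional `L` would define a game, "guess `t`,
earning `L (δ_(n,t))` in state `n`", in which reporting the signal achieves `L q` over `q`,
while every pure strategy over `p` earns `L` of a deterministic garbling of `p`, which stays
below the separating level.
-/

open BigOperators

/-- `p` is a probability distribution on the finite type `ι`. -/
def IsDist {ι : Type} [Fintype ι] (p : ι → ℝ) : Prop :=
  (∀ x, 0 ≤ p x) ∧ ∑ x, p x = 1

/-- The value of the classical game with action set `Fin k` and payoffs `M`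
over the information structure `(N, S, p)`: the maximum, over all strategies
`g : S → Fin k`, of the expected payoff. -/
noncomputable def cValue {N S : Type} [Fintype N] [Fintype S] (p : N × S → ℝ)
    {k : ℕ} (M : Fin k → N → ℝ) : ℝ :=
  sSup {v : ℝ | ∃ g : S → Fin k, v = ∑ n, ∑ s, p (n, s) * M (g s) n}

/-- `(N, S, p)` is better than `(N, T, q)`: for every classical game, the value
over `(N, S, p)` is at least the value over `(N, T, q)`. -/
def ClBetter {N S T : Type} [Fintype N] [Fintype S] [Fintype T]
    (p : N × S → ℝ) (q : N × T → ℝ) : Prop :=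
  ∀ (k : ℕ) (M : Fin k → N → ℝ), cValue q M ≤ cValue p M

theorem nonempty_of_sum_eq_one {ι : Type} [Fintype ι] {w : ι → ℝ} (hw : ∑ i, w i = 1) :
    Nonempty ι :=
  Finset.univ_nonempty_iff.mp <| Finset.nonempty_of_sum_ne_zero <| hw ▸ one_ne_zero

theorem exists_sum_mul_le_of_mem_stdSimplex {ι : Type} [Fintype ι] {w : ι → ℝ}
    (hw : w ∈ stdSimplex ℝ ι) (d : ι → ℝ) : ∃ i, ∑ j, w j * d j ≤ d i := by
  have := nonempty_of_sum_eq_one hw.2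
  obtain ⟨i, hi⟩ := Finite.exists_max d
  refine ⟨i, ?_⟩
  calc ∑ j, w j * d j ≤ ∑ j, w j * d i :=
        Finset.sum_le_sum fun j _ => mul_le_mul_of_nonneg_left (hi j) (hw.1 j)
    _ = d i := by rw [← Finset.sum_mul, hw.2, one_mul]

section Value

variable {N S T : Type} [Fintype N] [Fintype S] [Fintype T]

noncomputable def payoff (p : N × S → ℝ) {k : ℕ} (M : Fin k → N → ℝ) (g : S → Fin k) : ℝ :=
  ∑ n, ∑ s, p (n, s) * M (g s) n

theorem cValue_eq_sSup_range (p : N × S → ℝ) {k : ℕ} (M : Fin k → N → ℝ) :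
    cValue p M = sSup (Set.range (payoff p M)) := by
  simp only [cValue, payoff, Set.range, eq_comm]

theorem payoff_le_cValue (p : N × S → ℝ) {k : ℕ} (M : Fin k → N → ℝ) (g : S → Fin k) :
    payoff p M g ≤ cValue p M := by
  rw [cValue_eq_sSup_range]
  exact le_csSup (Set.finite_range _).bddAbove ⟨g, rfl⟩

theorem cValue_le {p : N × S → ℝ} {k : ℕ} {M : Fin k → N → ℝ} {v : ℝ} [Nonempty (S → Fin k)]
    (h : ∀ g, payoff p M g ≤ v) : cValue p M ≤ v := by
  rw [cValue_eq_sSup_range]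
  exact csSup_le (Set.range_nonempty _) (Set.forall_mem_range.2 h)

-- With no actions, the set of payoffs is `∅` or `{0}`; both have `sSup = 0` in `ℝ`.
theorem cValue_fin_zero (p : N × S → ℝ) (M : Fin 0 → N → ℝ) : cValue p M = 0 := by
  have hpayoff (g : S → Fin 0) : payoff p M g = 0 := by
    have : IsEmpty S := ⟨fun s => (g s).elim0⟩
    simp [payoff]
  rw [cValue_eq_sSup_range]
  exact le_antisymm (Real.sSup_nonpos (by simp [hpayoff])) (Real.sSup_nonneg (by simp [hpayoff]))

theorem cValue_le_cValue_of_forall_exists_payoff_le {p : N × S → ℝ} {q : N × T → ℝ} {k : ℕ}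
    {M : Fin k → N → ℝ} (hdom : ∀ h, ∃ g, payoff q M h ≤ payoff p M g) :
    cValue q M ≤ cValue p M := by
  cases k with
  | zero => rw [cValue_fin_zero, cValue_fin_zero]
  | succ k =>
    refine cValue_le fun h => ?_
    obtain ⟨g, hg⟩ := hdom h
    exact hg.trans (payoff_le_cValue p M g)

end Value

section Garbling

variable {N S T : Type} [Fintype S]

def garble (p : N × S → ℝ) : (S → T → ℝ) →ₗ[ℝ] N × T → ℝ where
  toFun f i := ∑ s, p (i.1, s) * f s i.2
  map_add' f g := by ext; simp [mul_add, Finset.sum_add_distrib]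
  map_smul' c f := by ext; simp [Finset.mul_sum, mul_left_comm]

theorem garble_apply (p : N × S → ℝ) (f : S → T → ℝ) (n : N) (t : T) :
    garble p f (n, t) = ∑ s, p (n, s) * f s t := rfl

theorem garble_single_self [DecidableEq S] (q : N × S → ℝ) :
    garble q (fun s => Pi.single s 1) = q := by
  ext ⟨n, s⟩
  simp [garble_apply, Pi.single_apply]

theorem garble_single [Fintype N] [DecidableEq N] [DecidableEq T] (p : N × S → ℝ) (τ : S → T) :
    garble p (fun s => Pi.single (τ s) 1) = ∑ n, ∑ s, p (n, s) • Pi.single (n, τ s) 1 := by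
  ext ⟨n, t⟩
  simp [garble_apply, Pi.single_apply, Finset.sum_apply, ite_and, Finset.sum_ite_irrel]

theorem payoff_eq_apply_garble_single [Fintype N] [DecidableEq N] [DecidableEq T]
    (p : N × S → ℝ) (L : (N × T → ℝ) →ₗ[ℝ] ℝ) {k : ℕ}
    (e : Fin k → T) (g : S → Fin k) :
    payoff p (fun a n => L (Pi.single (n, e a) 1)) g =
      L (garble p fun s => Pi.single (e (g s)) 1) := by
  simp [garble_single, payoff]

variable [Fintype N] [Fintype T]

theorem payoff_garble (p : N × S → ℝ) (f : S → T → ℝ) {k : ℕ} (M : Fin k → N → ℝ)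
    (h : T → Fin k) :
    payoff (garble p f) M h = ∑ s, ∑ t, f s t * ∑ n, p (n, s) * M (h t) n := by
  simp only [payoff, garble_apply, Finset.sum_mul, Finset.mul_sum]
  rw [Finset.sum_comm, Finset.sum_comm (s := Finset.univ (α := S))]
  refine Finset.sum_congr rfl fun t _ => ?_
  rw [Finset.sum_comm]
  exact Finset.sum_congr rfl fun s _ => Finset.sum_congr rfl fun n _ => by ring

theorem exists_payoff_garble_le {p : N × S → ℝ} {f : S → T → ℝ}
    (hf : f ∈ Set.univ.pi fun _ => stdSimplex ℝ T) {k : ℕ} (M : Fin k → N → ℝ) (h : T → Fin k) :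
    ∃ g, payoff (garble p f) M h ≤ payoff p M g := by
  choose τ hτ using fun s =>
    exists_sum_mul_le_of_mem_stdSimplex (hf s trivial) fun t => ∑ n, p (n, s) * M (h t) n
  refine ⟨h ∘ τ, ?_⟩
  rw [payoff_garble, payoff, Finset.sum_comm (s := Finset.univ (α := N))]
  exact Finset.sum_le_sum fun s _ => hτ s

theorem clBetter_garble (p : N × S → ℝ) {f : S → T → ℝ}
    (hf : f ∈ Set.univ.pi fun _ => stdSimplex ℝ T) : ClBetter p (garble p f) :=
  fun _ M => cValue_le_cValue_of_forall_exists_payoff_le (exists_payoff_garble_le hf M)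

end Garbling

theorem mem_garble_image_of_clBetter {N S T : Type} [Fintype N] [Fintype S] [Fintype T]
    [Nonempty T] {p : N × S → ℝ} {q : N × T → ℝ} (h : ClBetter p q) :
    q ∈ garble p '' Set.univ.pi fun _ => stdSimplex ℝ T := by
  classical
  set K := garble p '' Set.univ.pi fun _ => stdSimplex ℝ T
  have hK_compact : IsCompact K :=
    (isCompact_univ_pi fun _ => isCompact_stdSimplex ℝ T).image
      (garble p).continuous_of_finiteDimensional
  have hK_convex : Convex ℝ K := (convex_pi fun _ _ => convex_stdSimplex ℝ T).linear_image _
  by_contra hq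
  obtain ⟨L, u, hLK, hLq⟩ := geometric_hahn_banach_closed_point hK_convex hK_compact.isClosed hq
  let ℓ : (N × T → ℝ) →ₗ[ℝ] ℝ := L
  let e := (Fintype.equivFin T).symm
  let M : Fin (Fintype.card T) → N → ℝ := fun a n => ℓ (Pi.single (n, e a) 1)
  have hq_le : ℓ q ≤ cValue q M := by
    simpa [M, payoff_eq_apply_garble_single, garble_single_self] using payoff_le_cValue q M e.symm
  have hp_le : cValue p M ≤ u := cValue_le fun g => by
    rw [payoff_eq_apply_garble_single]
    exact (hLK _ ⟨_, fun s _ => single_mem_stdSimplex ℝ (e (g s)), rfl⟩).le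
  exact (hLq.trans_le (hq_le.trans ((h _ M).trans hp_le))).false

theorem classical_blackwell_general {N S T : Type} [Fintype N] [Fintype S] [Fintype T]
    (p : N × S → ℝ) (q : N × T → ℝ) (hq : IsDist q) :
    ClBetter p q ↔
      ∃ f : S → T → ℝ,
        (∀ s t, 0 ≤ f s t) ∧ (∀ s, ∑ t, f s t = 1) ∧
        (∀ n t, q (n, t) = ∑ s, p (n, s) * f s t) := by
  have : Nonempty T := (nonempty_of_sum_eq_one hq.2).map Prod.snd
  constructor
  · intro h
    obtain ⟨f, hf, rfl⟩ := mem_garble_image_of_clBetter h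
    exact ⟨f, fun s => (hf s trivial).1, fun s => (hf s trivial).2, fun _ _ => rfl⟩
  · rintro ⟨f, hf_nonneg, hf_sum, hqf⟩
    obtain rfl : q = garble p f := funext fun i => hqf i.1 i.2
    exact clBetter_garble p fun s _ => ⟨hf_nonneg s, hf_sum s⟩

/-- **Blackwell's theorem** (classical statistics): `(N, S, p)` is better than
`(N, T, q)` iff there is a stochastic matrix `f` with `q_{n,t} = Σ_s p_{n,s} f_{s,t}`. -/
theorem classical_blackwell {N S T : Type} [Fintype N] [Fintype S] [Fintype T]
    (p : N × S → ℝ) (q : N × T → ℝ) (hp : IsDist p) (hq : IsDist q) :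
    ClBetter p q ↔
      ∃ f : S → T → ℝ,
        (∀ s t, 0 ≤ f s t) ∧ (∀ s, ∑ t, f s t = 1) ∧
        (∀ n t, q (n, t) = ∑ s, p (n, s) * f s t) :=
  classical_blackwell_general p q hq
end

section
/- Let Φ = Φ_NS be a density operator on H_N ⊗ H_S and Ψ = Ψ_NT a density operator on H_N ⊗ H_T. If there exists a positive (not necessarily completely positive) trace-preserving linear map E from operators on H_S to operators on H_T with Ψ = (id_N ⊗ E)(Φ), then for every k and all Hermitian operators M^1, …, M^k on H_N, the trivial-environment game values satisfy R(Ψ; M^1, …, M^k) ≤ R(Φ; M^1, …, M^k). -/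
open Matrix Kronecker BigOperators
open scoped ComplexOrder

/-- A density operator: positive semidefinite with trace 1. -/
def IsDensity {ι : Type} [Fintype ι] (A : Matrix ι ι ℂ) : Prop :=
  A.PosSemidef ∧ A.trace = 1

/-- A POVM with `k` outcomes: positive semidefinite operators summing to the identity. -/
def IsPOVM {ι : Type} [Fintype ι] [DecidableEq ι] {k : ℕ}
    (D : Fin k → Matrix ι ι ℂ) : Prop :=
  (∀ i, (D i).PosSemidef) ∧ ∑ i, D i = 1

/-- Value of the trivial-environment game given by Hermitian payoff observables
`M^1, …, M^k` on `H_N`, over the information structure `Φ` on `H_N ⊗ H_S`: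
the maximum over POVMs `(D^1, …, D^k)` on `H_S` of `Σ_i tr(Φ·(M^i ⊗ D^i))`. -/
noncomputable def RvalTriv {n s k : ℕ}
    (Φ : Matrix (Fin n × Fin s) (Fin n × Fin s) ℂ)
    (M : Fin k → Matrix (Fin n) (Fin n) ℂ) : ℝ :=
  sSup {r : ℝ | ∃ D : Fin k → Matrix (Fin s) (Fin s) ℂ,
    IsPOVM D ∧ r = ∑ i, ((Φ * (M i ⊗ₖ D i)).trace).re}

/-- `id_N ⊗ E`, the map on operators on `ℂ^m ⊗ H_S` determined by
`(id ⊗ E)(x ⊗ y) = x ⊗ E(y)`, defined blockwise. -/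
def matLift {s t : ℕ} (m : ℕ)
    (E : Matrix (Fin s) (Fin s) ℂ →ₗ[ℂ] Matrix (Fin t) (Fin t) ℂ)
    (X : Matrix (Fin m × Fin s) (Fin m × Fin s) ℂ) :
    Matrix (Fin m × Fin t) (Fin m × Fin t) ℂ :=
  Matrix.of fun p q => E (Matrix.of fun σ σ' => X (p.1, σ) (q.1, σ')) p.2 q.2

/-- `E` is trace preserving. -/
def TracePreserving {s t : ℕ}
    (E : Matrix (Fin s) (Fin s) ℂ →ₗ[ℂ] Matrix (Fin t) (Fin t) ℂ) : Prop :=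
  ∀ X, (E X).trace = X.trace

/-- `E` is positive: it maps positive semidefinite operators to positive
semidefinite operators. -/
def PositiveMap {s t : ℕ}
    (E : Matrix (Fin s) (Fin s) ℂ →ₗ[ℂ] Matrix (Fin t) (Fin t) ℂ) : Prop :=
  ∀ X : Matrix (Fin s) (Fin s) ℂ, X.PosSemidef → (E X).PosSemidef


/-!
The game value over `Ψ = (id ⊗ E)(Φ)` is a supremum over POVMs `D` on `H_T`, and the
Heisenberg-picture dual `E†` (the adjoint of `E` for the trace pairing) turns them into POVMs on
`H_S` with the same payoff: `tr((id ⊗ E)(Φ) (M ⊗ D)) = tr(Φ (M ⊗ E† D))`. Positivity of `E` is all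
that is needed for `E†` to be positive (`x† (E† D) x = tr(E(x x†) D) ≥ 0`), and trace preservation
makes `E†` unital. Hence every payoff achievable over `Ψ` is achievable over `Φ`, and the payoffs
over `Φ` are bounded since POVM entries have modulus at most `1`.
-/

namespace Matrix

variable {l m n R : Type*} [Fintype l] [Fintype m] [Fintype n]

theorem posSemidef_of_dotProduct_mulVec_nonneg {A : Matrix n n ℂ}
    (h : ∀ x, 0 ≤ star x ⬝ᵥ (A *ᵥ x)) : A.PosSemidef := by
  classical
  rw [← isPositive_toEuclideanLin_iff, LinearMap.isPositive_iff_complex]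
  intro x
  rw [EuclideanSpace.inner_eq_star_dotProduct]
  simp only [ofLp_toLpLin, toLin'_apply]
  rw [dotProduct_star, dotProduct_comm (A *ᵥ _)]
  obtain ⟨hre, him⟩ := Complex.nonneg_iff.mp (h x.ofLp)
  exact ⟨Complex.ext (by simp) (by simp [← him]), by simpa using hre⟩

theorem PosSemidef.trace_mul_nonneg {𝕜 : Type*} [RCLike 𝕜] {A B : Matrix n n 𝕜}
    (hA : A.PosSemidef) (hB : B.PosSemidef) : 0 ≤ (A * B).trace := by
  classical
  open scoped MatrixOrder in
  obtain ⟨C, rfl⟩ := CStarAlgebra.nonneg_iff_eq_star_mul_self.mp hA.nonneg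
  rw [star_eq_conjTranspose, mul_assoc, trace_mul_comm, mul_assoc]
  simpa [mul_assoc] using (hB.mul_mul_conjTranspose_same C).trace_nonneg

omit [Fintype n] in
theorem PosSemidef.norm_apply_sq_le {𝕜 : Type*} [RCLike 𝕜] {A : Matrix n n 𝕜}
    (hA : A.PosSemidef) (i j : n) : ‖A i j‖ ^ 2 ≤ RCLike.re (A i i) * RCLike.re (A j j) := by
  have hdet := (hA.submatrix ![i, j]).det_nonneg
  rw [det_fin_two] at hdet
  simp only [submatrix_apply, cons_val_zero, cons_val_one, sub_nonneg] at hdet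
  rw [← hA.isHermitian.apply j i, RCLike.star_def, RCLike.mul_conj,
    ← hA.isHermitian.coe_re_apply_self i, ← hA.isHermitian.coe_re_apply_self j] at hdet
  exact_mod_cast hdet

section traceAdjoint

variable [DecidableEq m] [CommSemiring R]

def traceAdjoint (E : Matrix m m R →ₗ[R] Matrix n n R) : Matrix n n R →ₗ[R] Matrix m m R where
  toFun Y := of fun a b => (E (single b a 1) * Y).trace
  map_add' Y Z := by ext; simp [mul_add]
  map_smul' c Y := by ext; simp

theorem trace_map_mul_eq_trace_mul_traceAdjoint (E : Matrix m m R →ₗ[R] Matrix n n R)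
    (X : Matrix m m R) (Y : Matrix n n R) : (E X * Y).trace = (X * traceAdjoint E Y).trace := by
  induction X using Matrix.induction_on' with
  | h_zero => simp
  | h_add X X' hX hX' => simp [add_mul, hX, hX']
  | h_std_basis a b x =>
    have hsingle : single a b x = x • single a b 1 := by rw [smul_single, smul_eq_mul, mul_one]
    rw [hsingle, map_smul, smul_mul, trace_smul, smul_mul, trace_smul, trace_single_mul]
    simp [traceAdjoint]

theorem traceAdjoint_one [DecidableEq n] {E : Matrix m m R →ₗ[R] Matrix n n R}
    (hE : ∀ X, (E X).trace = X.trace) : traceAdjoint E 1 = 1 := by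
  ext a b
  simp only [traceAdjoint, LinearMap.coe_mk, AddHom.coe_mk, of_apply, mul_one, hE]
  obtain rfl | h := eq_or_ne a b
  · simp
  · simp [h, h.symm]

theorem posSemidef_traceAdjoint {E : Matrix m m ℂ →ₗ[ℂ] Matrix n n ℂ}
    (hE : ∀ X, X.PosSemidef → (E X).PosSemidef) {Y : Matrix n n ℂ} (hY : Y.PosSemidef) :
    (traceAdjoint E Y).PosSemidef := by
  refine posSemidef_of_dotProduct_mulVec_nonneg fun x => ?_
  have hform : star x ⬝ᵥ (traceAdjoint E Y *ᵥ x) =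
      (vecMulVec x (star x) * traceAdjoint E Y).trace := by
    rw [vecMulVec_mul, trace_vecMulVec, dotProduct_mulVec, dotProduct_comm]
  rw [hform, ← trace_map_mul_eq_trace_mul_traceAdjoint]
  exact (hE _ (posSemidef_vecMulVec_self_star x)).trace_mul_nonneg hY

end traceAdjoint

theorem trace_comp_mul_kronecker [CommSemiring R] (B : Matrix l l (Matrix m m R))
    (M : Matrix l l R) (D : Matrix m m R) :
    (comp l l m m R B * (M ⊗ₖ D)).trace = ∑ p, ∑ q, M q p * (B p q * D).trace := by
  simp only [trace, diag, mul_apply, Fintype.sum_prod_type, comp_apply, kroneckerMap_apply,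
    Finset.mul_sum, mul_left_comm (M _ _)]
  exact Finset.sum_congr rfl fun p _ => Finset.sum_comm

theorem re_trace_mul_kronecker_le (X : Matrix (l × m) (l × m) ℂ) (M : Matrix l l ℂ)
    {D : Matrix m m ℂ} (hD : ∀ a b, ‖D a b‖ ≤ 1) :
    (X * (M ⊗ₖ D)).trace.re ≤ ∑ p, ∑ q, ‖X p q‖ * ‖M q.1 p.1‖ :=
  calc (X * (M ⊗ₖ D)).trace.re
      ≤ ‖(X * (M ⊗ₖ D)).trace‖ := Complex.re_le_norm _
    _ ≤ ∑ p, ∑ q, ‖X p q * (M ⊗ₖ D) q p‖ :=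
      (norm_sum_le _ _).trans (Finset.sum_le_sum fun p _ => norm_sum_le _ _)
    _ ≤ ∑ p, ∑ q, ‖X p q‖ * ‖M q.1 p.1‖ := by
      gcongr with p _ q _
      rw [norm_mul, kroneckerMap_apply, norm_mul]
      exact mul_le_mul_of_nonneg_left (mul_le_of_le_one_right (norm_nonneg _) (hD _ _))
        (norm_nonneg _)

end Matrix

section POVM

variable {ι κ : Type} [Fintype ι] [DecidableEq ι] [Fintype κ] [DecidableEq κ] {k : ℕ}

theorem isPOVM_pi_single (j : Fin k) : IsPOVM (Pi.single j (1 : Matrix ι ι ℂ)) := by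
  refine ⟨fun i => ?_, by simp⟩
  obtain rfl | h := eq_or_ne i j
  · simpa using PosSemidef.one
  · simpa [h] using PosSemidef.zero

theorem IsPOVM.re_apply_self_le_one {D : Fin k → Matrix ι ι ℂ} (hD : IsPOVM D) (i : Fin k)
    (a : ι) : (D i a a).re ≤ 1 := by
  have hsum : ∑ j, (D j a a).re = 1 := by
    simpa [Matrix.sum_apply] using congrArg (fun A : Matrix ι ι ℂ => (A a a).re) hD.2
  rw [← hsum]
  exact Finset.single_le_sum (fun j _ => (Complex.nonneg_iff.mp ((hD.1 j).diag_nonneg)).1)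
    (Finset.mem_univ i)

theorem IsPOVM.norm_apply_le_one {D : Fin k → Matrix ι ι ℂ} (hD : IsPOVM D) (i : Fin k)
    (a b : ι) : ‖D i a b‖ ≤ 1 := by
  have hsq := (hD.1 i).norm_apply_sq_le a b
  have hb := (Complex.nonneg_iff.mp ((hD.1 i).diag_nonneg (i := b))).1
  have hprod : (D i a a).re * (D i b b).re ≤ 1 :=
    mul_le_one₀ (hD.re_apply_self_le_one i a) hb (hD.re_apply_self_le_one i b)
  exact (pow_le_one_iff_of_nonneg (norm_nonneg _) two_ne_zero).mp
    (hsq.trans (by simpa using hprod))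

theorem IsPOVM.traceAdjoint {E : Matrix κ κ ℂ →ₗ[ℂ] Matrix ι ι ℂ}
    (hpos : ∀ X, X.PosSemidef → (E X).PosSemidef) (htp : ∀ X, (E X).trace = X.trace)
    {D : Fin k → Matrix ι ι ℂ} (hD : IsPOVM D) : IsPOVM fun i => traceAdjoint E (D i) :=
  ⟨fun i => posSemidef_traceAdjoint hpos (hD.1 i), by rw [← map_sum, hD.2, traceAdjoint_one htp]⟩

end POVM

section GameValue

variable {n s t k : ℕ}

def achievablePayoffs (Φ : Matrix (Fin n × Fin s) (Fin n × Fin s) ℂ)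
    (M : Fin k → Matrix (Fin n) (Fin n) ℂ) : Set ℝ :=
  {r : ℝ | ∃ D : Fin k → Matrix (Fin s) (Fin s) ℂ,
    IsPOVM D ∧ r = ∑ i, ((Φ * (M i ⊗ₖ D i)).trace).re}

theorem RvalTriv_eq_sSup_achievablePayoffs (Φ : Matrix (Fin n × Fin s) (Fin n × Fin s) ℂ)
    (M : Fin k → Matrix (Fin n) (Fin n) ℂ) : RvalTriv Φ M = sSup (achievablePayoffs Φ M) :=
  rfl

theorem bddAbove_achievablePayoffs (Φ : Matrix (Fin n × Fin s) (Fin n × Fin s) ℂ)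
    (M : Fin k → Matrix (Fin n) (Fin n) ℂ) : BddAbove (achievablePayoffs Φ M) := by
  refine ⟨∑ i, ∑ p, ∑ q, ‖Φ p q‖ * ‖M i q.1 p.1‖, ?_⟩
  rintro r ⟨D, hD, rfl⟩
  exact Finset.sum_le_sum fun i _ => re_trace_mul_kronecker_le Φ (M i) (hD.norm_apply_le_one i)

theorem achievablePayoffs_nonempty (Φ : Matrix (Fin n × Fin s) (Fin n × Fin s) ℂ)
    (M : Fin (k + 1) → Matrix (Fin n) (Fin n) ℂ) : (achievablePayoffs Φ M).Nonempty :=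
  ⟨_, _, isPOVM_pi_single 0, rfl⟩

theorem RvalTriv_of_fin_zero (Φ : Matrix (Fin n × Fin s) (Fin n × Fin s) ℂ)
    (M : Fin 0 → Matrix (Fin n) (Fin n) ℂ) : RvalTriv Φ M = 0 := by
  -- Without outcomes a POVM exists only if `s = 0`: the payoff set is `∅` or `{0}`.
  have hzero : ∀ r ∈ achievablePayoffs Φ M, r = 0 := by
    rintro r ⟨D, -, rfl⟩
    simp
  exact le_antisymm (Real.sSup_nonpos fun r hr => (hzero r hr).le)
    (Real.sSup_nonneg fun r hr => (hzero r hr).ge)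

theorem trace_matLift_mul_kronecker (E : Matrix (Fin s) (Fin s) ℂ →ₗ[ℂ] Matrix (Fin t) (Fin t) ℂ)
    (X : Matrix (Fin n × Fin s) (Fin n × Fin s) ℂ) (M : Matrix (Fin n) (Fin n) ℂ)
    (D : Matrix (Fin t) (Fin t) ℂ) :
    (matLift n E X * (M ⊗ₖ D)).trace = (X * (M ⊗ₖ traceAdjoint E D)).trace := by
  have hblocks : matLift n E X = comp _ _ _ _ ℂ (((comp _ _ _ _ ℂ).symm X).map E) := rfl
  conv_rhs => rw [← (comp _ _ _ _ ℂ).apply_symm_apply X]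
  simp_rw [hblocks, trace_comp_mul_kronecker, map_apply, trace_map_mul_eq_trace_mul_traceAdjoint]

theorem achievablePayoffs_matLift_subset
    {E : Matrix (Fin s) (Fin s) ℂ →ₗ[ℂ] Matrix (Fin t) (Fin t) ℂ}
    (hpos : PositiveMap E) (htp : TracePreserving E)
    (Φ : Matrix (Fin n × Fin s) (Fin n × Fin s) ℂ) (M : Fin k → Matrix (Fin n) (Fin n) ℂ) :
    achievablePayoffs (matLift n E Φ) M ⊆ achievablePayoffs Φ M := by
  rintro r ⟨D, hD, rfl⟩
  exact ⟨_, hD.traceAdjoint hpos htp, by simp_rw [trace_matLift_mul_kronecker]⟩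

end GameValue

theorem positive_map_trivial_environment_general (n s t : ℕ)
    (Φ : Matrix (Fin n × Fin s) (Fin n × Fin s) ℂ)
    (Ψ : Matrix (Fin n × Fin t) (Fin n × Fin t) ℂ)
    (E : Matrix (Fin s) (Fin s) ℂ →ₗ[ℂ] Matrix (Fin t) (Fin t) ℂ)
    (hpos : PositiveMap E) (htp : TracePreserving E)
    (hsim : Ψ = matLift n E Φ) :
    ∀ (k : ℕ) (M : Fin k → Matrix (Fin n) (Fin n) ℂ),
      (∀ i, (M i).IsHermitian) → RvalTriv Ψ M ≤ RvalTriv Φ M := by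
  intro k M _
  rcases k with _ | k
  · rw [RvalTriv_of_fin_zero, RvalTriv_of_fin_zero]
  · rw [hsim, RvalTriv_eq_sSup_achievablePayoffs, RvalTriv_eq_sSup_achievablePayoffs]
    exact csSup_le_csSup (bddAbove_achievablePayoffs Φ M) (achievablePayoffs_nonempty _ M)
      (achievablePayoffs_matLift_subset hpos htp Φ M)

/-- If `Ψ = (id_N ⊗ E)(Φ)` for a positive (not necessarily completely positive)
trace-preserving map `E`, then every trivial-environment game has value over `Ψ`
at most its value over `Φ`. -/
theorem positive_map_trivial_environment (n s t : ℕ)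
    (Φ : Matrix (Fin n × Fin s) (Fin n × Fin s) ℂ)
    (Ψ : Matrix (Fin n × Fin t) (Fin n × Fin t) ℂ)
    (hΦ : IsDensity Φ) (hΨ : IsDensity Ψ)
    (E : Matrix (Fin s) (Fin s) ℂ →ₗ[ℂ] Matrix (Fin t) (Fin t) ℂ)
    (hpos : PositiveMap E) (htp : TracePreserving E)
    (hsim : Ψ = matLift n E Φ) :
    ∀ (k : ℕ) (M : Fin k → Matrix (Fin n) (Fin n) ℂ),
      (∀ i, (M i).IsHermitian) → RvalTriv Ψ M ≤ RvalTriv Φ M :=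
  positive_map_trivial_environment_general n s t Φ Ψ E hpos htp hsim
end

section
/- Let n ≥ 1, m = n², and let ρ₁, …, ρ_m be n×n density matrices that are linearly independent in the real vector space of n×n Hermitian matrices. Set Φ = (1/m) Σ_j ρ_j ⊗ ρ_j and Ψ = (1/m) Σ_j ρ_j ⊗ ρ_jᵀ. Then for every k and all Hermitian n×n matrices M^1, …, M^k, the trivial-environment game values satisfy R(Φ; M^1, …, M^k) ≥ R(Ψ; M^1, …, M^k). -/
open Matrix Kronecker BigOperators
open scoped ComplexOrder

lemma trace_swap {n : ℕ} (ρ A D : Matrix (Fin n) (Fin n) ℂ) :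
    ((ρ ⊗ₖ ρᵀ) * (A ⊗ₖ D)).trace = ((ρ ⊗ₖ ρ) * (A ⊗ₖ Dᵀ)).trace := by
  rw [← Matrix.mul_kronecker_mul, ← Matrix.mul_kronecker_mul,
    Matrix.trace_kronecker, Matrix.trace_kronecker]
  congr 1
  rw [← Matrix.trace_transpose (ρ * Dᵀ), Matrix.transpose_mul, Matrix.transpose_transpose,
    Matrix.trace_mul_comm]

/-- transposing a POVM gives a POVM -/
lemma IsPOVM.transpose {n k : ℕ} {D : Fin k → Matrix (Fin n) (Fin n) ℂ}
    (hD : IsPOVM D) : IsPOVM (fun i => (D i)ᵀ) := by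
  refine ⟨fun i => (hD.1 i).transpose, ?_⟩
  have : (∑ i, D i)ᵀ = (1 : Matrix (Fin n) (Fin n) ℂ)ᵀ := by rw [hD.2]
  simpa [Matrix.transpose_sum] using this

/-- For `Φ = (1/m) Σ_j ρ_j ⊗ ρ_j` and `Ψ = (1/m) Σ_j ρ_j ⊗ ρ_jᵀ` with `m = n²` and
`ρ₁, …, ρ_m` linearly independent density matrices, every trivial-environment game
has value over `Ψ` at most its value over `Φ`. -/
theorem transpose_pair_trivial_environment (n : ℕ) (hn : 1 ≤ n)
    (ρ : Fin (n ^ 2) → Matrix (Fin n) (Fin n) ℂ)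
    (hdens : ∀ j, IsDensity (ρ j))
    (hli : LinearIndependent ℝ ρ)
    (k : ℕ) (M : Fin k → Matrix (Fin n) (Fin n) ℂ)
    (hM : ∀ i, (M i).IsHermitian) :
    RvalTriv (((n ^ 2 : ℕ) : ℂ)⁻¹ • ∑ j, (ρ j) ⊗ₖ (ρ j)ᵀ) M ≤
      RvalTriv (((n ^ 2 : ℕ) : ℂ)⁻¹ • ∑ j, (ρ j) ⊗ₖ (ρ j)) M := by
  unfold RvalTriv
  apply le_of_eq
  congr 1
  have key : ∀ (A D : Matrix (Fin n) (Fin n) ℂ),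
      (((((n ^ 2 : ℕ) : ℂ))⁻¹ • ∑ j, (ρ j) ⊗ₖ (ρ j)ᵀ) * (A ⊗ₖ D)).trace =
      (((((n ^ 2 : ℕ) : ℂ))⁻¹ • ∑ j, (ρ j) ⊗ₖ (ρ j)) * (A ⊗ₖ Dᵀ)).trace := by
    intro A D
    rw [Matrix.smul_mul, Matrix.smul_mul, Finset.sum_mul, Finset.sum_mul,
      Matrix.trace_smul, Matrix.trace_smul, Matrix.trace_sum, Matrix.trace_sum]
    congr 1
    exact Finset.sum_congr rfl fun j _ => trace_swap (ρ j) A D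
  apply Set.Subset.antisymm
  · rintro r ⟨D, hD, rfl⟩
    refine ⟨fun i => (D i)ᵀ, hD.transpose, Finset.sum_congr rfl fun i _ => ?_⟩
    rw [key (M i) (D i)]
  · rintro r ⟨D, hD, rfl⟩
    refine ⟨fun i => (D i)ᵀ, hD.transpose, Finset.sum_congr rfl fun i _ => ?_⟩
    rw [key (M i) (D i)ᵀ, Matrix.transpose_transpose]
end

section
/- (Classical environments are superfluous.) Let (N, S, p) and (N, T, q) be classical information structures. Suppose that for every classical game with trivial environment (finite action set A and payoffs M^a : N → ℝ), the value over (N, S, p) is at least the value over (N, T, q). Then for every classical game with environment — given by finite sets A_env, B, a probability distribution r on A_env × B, a finite action set A, and payoffs M^a : N × B → ℝ, with value over (N, S, p) equal to max over functions g : S × A_env → A of Σ_{n,s,a,b} p_{n,s} r_{a,b} M^{g(s,a)}(n, b) — the value over (N, S, p) is at least the value over (N, T, q). -/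
open BigOperators

/-- The value of the classical game with environment `(Fin da × Fin db, r)`, action
set `Fin k` and payoffs `M : Fin k → N → Fin db → ℝ`, over `(N, S, p)`: the maximum
over strategies `g : S × Fin da → Fin k` of the expected payoff, where the
environment pair is drawn independently according to `r`. -/
noncomputable def cValueEnv {N S : Type} [Fintype N] [Fintype S] {da db : ℕ}
    (p : N × S → ℝ) (r : Fin da × Fin db → ℝ)
    {k : ℕ} (M : Fin k → N → Fin db → ℝ) : ℝ :=
  sSup {v : ℝ | ∃ g : S × Fin da → Fin k,
    v = ∑ n, ∑ s, ∑ a, ∑ b, p (n, s) * r (a, b) * M (g (s, a)) n b}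

/-- **Classical environments are superfluous.** If `(N, S, p)` yields at least the
value of `(N, T, q)` in every classical game with trivial environment, then the same
holds for every classical game with environment. -/
theorem classical_environment_superfluous {N S T : Type}
    [Fintype N] [Fintype S] [Fintype T]
    (p : N × S → ℝ) (q : N × T → ℝ) (hp : IsDist p) (hq : IsDist q)
    (htriv : ∀ (k : ℕ) (M : Fin k → N → ℝ), cValue q M ≤ cValue p M) :
    ∀ (da db : ℕ) (r : Fin da × Fin db → ℝ), IsDist r →
      ∀ (k : ℕ) (M : Fin k → N → Fin db → ℝ),
        cValueEnv q r M ≤ cValueEnv p r M := by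
  intro da db r hr k M
  set e := (finFunctionFinEquiv : (Fin da → Fin k) ≃ Fin (k ^ da)) with he
  set M' : Fin (k ^ da) → N → ℝ :=
    fun j n => ∑ a, ∑ b, r (a, b) * M (e.symm j a) n b with hM'
  have key : ∀ (X : Type) [Fintype X] (u : N × X → ℝ),
      cValueEnv u r M = cValue u M' := by
    intro X _ u
    unfold cValueEnv cValue
    congr 1
    ext v
    constructor
    · rintro ⟨g, rfl⟩
      refine ⟨fun s => e (fun a => g (s, a)), ?_⟩
      simp [hM', Finset.mul_sum, mul_assoc]
    · rintro ⟨g, rfl⟩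
      refine ⟨fun sa => e.symm (g sa.1) sa.2, ?_⟩
      simp [hM', Finset.mul_sum, mul_assoc]
  rw [key S p, key T q]
  exact htriv _ M'
end
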